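/- Let D ⊆ ℝ³ be a bounded measurable set. There exists a constant C > 0 (depending only on D) such that for all measurable functions x₁, x₂, z : ℝ³ → ℝ vanishing outside D with ‖x₁‖_{L⁶} < ∞, ‖x₂‖_{L⁶} < ∞, ‖z‖_{L⁶} < ∞, and every continuously differentiable, compactly supported function φ : ℝ³ → ℝ, one has |∫_{ℝ³} (x₁ − x₂) z (x₁ + x₂) φ dx| ≤ C · ‖x₁ − x₂‖_{L⁶} · (‖z‖_{L⁶}² + ‖x₁‖_{L⁶}² + ‖x₂‖_{L⁶}²) · ‖ |Dφ| ‖_{L²(ℝ³)}, where |Dφ(x)| denotes the norm of the (Fréchet) derivative of φ at x. -/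

import Mathlib

/-!
By Hölder's inequality with `1 = 1/6 + 1/3 + 1/3 + 1/6`, the integral is at most
`‖x₁ - x₂‖₆ ‖z‖₃ ‖x₁ + x₂‖₃ ‖φ‖₆`. In dimension three the Gagliardo–Nirenberg–Sobolev
inequality bounds `‖φ‖₆` by `‖Dφ‖₂`, and since `z` and `x₁ + x₂` vanish outside the set `D` of
finite measure, their `L³` norms are at most `|D|^{1/6}` times their `L⁶` norms. Young's
inequality finally gives `‖z‖₆ (‖x₁‖₆ + ‖x₂‖₆) ≤ ‖z‖₆² + ‖x₁‖₆² + ‖x₂‖₆²`.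
-/

open MeasureTheory
open scoped ENNReal

instance ENNReal.HolderTriple.instSixThreeTwo : ENNReal.HolderTriple 6 3 2 :=
  .of_toReal ⟨by norm_num, by norm_num, by norm_num⟩

theorem mul_add_le_sq_add_sq_add_sq (a b c : ℝ) : a * (b + c) ≤ a ^ 2 + b ^ 2 + c ^ 2 := by
  nlinarith [two_mul_le_add_sq a b, two_mul_le_add_sq a c, sq_nonneg b, sq_nonneg c]

namespace MeasureTheory

section Holder

variable {α : Type*} [MeasurableSpace α] {μ : Measure α}

theorem eLpNorm_le_eLpNorm_mul_rpow_measure_of_support_subset {E : Type*} [NormedAddCommGroup E]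
    {f : α → E} {s : Set α} {p q : ℝ≥0∞} (hpq : p ≤ q) (hf : AEStronglyMeasurable f μ)
    (hfs : f.support ⊆ s) :
    eLpNorm f p μ ≤ eLpNorm f q μ * μ s ^ (1 / p.toReal - 1 / q.toReal) := by
  have := eLpNorm_le_eLpNorm_mul_rpow_measure_univ hpq (hf.restrict (s := s))
  rwa [eLpNorm_restrict_eq_of_support_subset hfs, eLpNorm_restrict_eq_of_support_subset hfs,
    Measure.restrict_apply_univ] at this

theorem enorm_integral_le_eLpNorm_one {E : Type*} [NormedAddCommGroup E] [NormedSpace ℝ E]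
    (f : α → E) : ‖∫ x, f x ∂μ‖ₑ ≤ eLpNorm f 1 μ := by
  rw [eLpNorm_one_eq_lintegral_enorm]
  exact enorm_integral_le_lintegral_enorm f

variable {𝕜 : Type*} [NormedRing 𝕜]

theorem eLpNorm_mul_le_mul_eLpNorm {f g : α → 𝕜} {p q r : ℝ≥0∞} [ENNReal.HolderTriple p q r]
    (hf : AEStronglyMeasurable f μ) (hg : AEStronglyMeasurable g μ) :
    eLpNorm (fun x => f x * g x) r μ ≤ eLpNorm f p μ * eLpNorm g q μ := by
  simpa using eLpNorm_le_eLpNorm_mul_eLpNorm'_of_norm hf hg (· * ·) 1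
    (.of_forall fun _ => by simpa using norm_mul_le _ _)

theorem eLpNorm_mul_mul_mul_le {f g h k : α → 𝕜} {p q p' q' a b r : ℝ≥0∞}
    [ENNReal.HolderTriple p q a] [ENNReal.HolderTriple p' q' b] [ENNReal.HolderTriple a b r]
    (hf : AEStronglyMeasurable f μ) (hg : AEStronglyMeasurable g μ)
    (hh : AEStronglyMeasurable h μ) (hk : AEStronglyMeasurable k μ) :
    eLpNorm (fun x => f x * g x * h x * k x) r μ ≤
      eLpNorm f p μ * eLpNorm g q μ * (eLpNorm h p' μ * eLpNorm k q' μ) := by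
  simp_rw [mul_assoc (f _ * g _)]
  calc eLpNorm (fun x => f x * g x * (h x * k x)) r μ
      ≤ eLpNorm (fun x => f x * g x) a μ * eLpNorm (fun x => h x * k x) b μ :=
        eLpNorm_mul_le_mul_eLpNorm (hf.mul hg) (hh.mul hk)
    _ ≤ _ := by gcongr <;> exact eLpNorm_mul_le_mul_eLpNorm ‹_› ‹_›

end Holder

section ThreeDimensional

variable {E : Type*} [NormedAddCommGroup E] [NormedSpace ℝ E] [MeasurableSpace E] [BorelSpace E]
  [FiniteDimensional ℝ E] (μ : Measure E) [μ.IsAddHaarMeasure]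

theorem eLpNorm_six_le_eLpNorm_fderiv_two (hE : Module.finrank ℝ E = 3) {φ : E → ℝ}
    (hφ : ContDiff ℝ 1 φ) (hφc : HasCompactSupport φ) :
    eLpNorm φ 6 μ ≤ eLpNormLESNormFDerivOfEqInnerConst μ 2 * eLpNorm (fderiv ℝ φ) 2 μ := by
  have := eLpNorm_le_eLpNorm_fderiv_of_eq_inner μ hφ hφc (p := 2) (p' := 6) one_le_two
    (by omega) (by rw [hE]; norm_num)
  exact_mod_cast this

theorem enorm_integral_mul_mul_mul_le (hE : Module.finrank ℝ E = 3) {f g h φ : E → ℝ}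
    (hf : AEStronglyMeasurable f μ) (hg : AEStronglyMeasurable g μ)
    (hh : AEStronglyMeasurable h μ) (hφ : ContDiff ℝ 1 φ) (hφc : HasCompactSupport φ) :
    ‖∫ x, f x * g x * h x * φ x ∂μ‖ₑ ≤ eLpNormLESNormFDerivOfEqInnerConst μ 2 *
      (eLpNorm f 6 μ * eLpNorm g 3 μ * eLpNorm h 3 μ) * eLpNorm (fderiv ℝ φ) 2 μ :=
  calc ‖∫ x, f x * g x * h x * φ x ∂μ‖ₑ
      ≤ eLpNorm f 6 μ * eLpNorm g 3 μ * (eLpNorm h 3 μ * eLpNorm φ 6 μ) :=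
        (enorm_integral_le_eLpNorm_one _).trans <|
          eLpNorm_mul_mul_mul_le (a := 2) (b := 2) hf hg hh hφ.continuous.aestronglyMeasurable
    _ ≤ eLpNorm f 6 μ * eLpNorm g 3 μ * (eLpNorm h 3 μ *
          (eLpNormLESNormFDerivOfEqInnerConst μ 2 * eLpNorm (fderiv ℝ φ) 2 μ)) := by
        gcongr
        exact eLpNorm_six_le_eLpNorm_fderiv_two μ hE hφ hφc
    _ = _ := by ring

end ThreeDimensional

end MeasureTheory

theorem dual_continuity_estimate_general
    (D : Set (EuclideanSpace ℝ (Fin 3)))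
    (hDbdd : Bornology.IsBounded D) :
    ∃ C : ℝ, 0 < C ∧
      ∀ (x₁ x₂ z φ : EuclideanSpace ℝ (Fin 3) → ℝ),
        Measurable x₁ → Measurable x₂ → Measurable z →
        (∀ x ∉ D, x₁ x = 0) → (∀ x ∉ D, x₂ x = 0) → (∀ x ∉ D, z x = 0) →
        eLpNorm x₁ 6 volume < ∞ → eLpNorm x₂ 6 volume < ∞ →
        eLpNorm z 6 volume < ∞ →
        ContDiff ℝ 1 φ → HasCompactSupport φ →
        |∫ x, (x₁ x - x₂ x) * z x * (x₁ x + x₂ x) * φ x| ≤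
          C * (eLpNorm (fun x => x₁ x - x₂ x) 6 volume).toReal *
            ((eLpNorm z 6 volume).toReal ^ 2 + (eLpNorm x₁ 6 volume).toReal ^ 2 +
              (eLpNorm x₂ 6 volume).toReal ^ 2) *
            (eLpNorm (fun x => ‖fderiv ℝ φ x‖) 2 volume).toReal := by
  set K := eLpNormLESNormFDerivOfEqInnerConst (volume : Measure (EuclideanSpace ℝ (Fin 3))) 2
  set I := volume D ^ (1 / 6 : ℝ)
  have hI : I ≠ ∞ := ENNReal.rpow_ne_top_of_nonneg (by norm_num) hDbdd.measure_lt_top.ne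
  refine ⟨(K * I ^ 2).toReal + 1, by positivity, ?_⟩
  intro x₁ x₂ z φ hx₁ hx₂ hz hx₁D hx₂D hzD hx₁6 hx₂6 hz6 hφ hφc
  have hL3 : ∀ f : EuclideanSpace ℝ (Fin 3) → ℝ, Measurable f → (∀ x ∉ D, f x = 0) →
      eLpNorm f 3 volume ≤ eLpNorm f 6 volume * I := fun f hf hfD => by
    have := eLpNorm_le_eLpNorm_mul_rpow_measure_of_support_subset (μ := volume) (p := 3) (q := 6)
      (by norm_num) hf.aestronglyMeasurable (Function.support_subset_iff'.2 hfD)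
    norm_num at this
    exact this
  set U := eLpNorm (fun x => x₁ x - x₂ x) 6 volume
  set Z := eLpNorm z 6 volume
  set X₁ := eLpNorm x₁ 6 volume
  set X₂ := eLpNorm x₂ 6 volume
  set Φ := eLpNorm (fderiv ℝ φ) 2 volume
  have hU : U ≠ ∞ :=
    (MemLp.sub ⟨hx₁.aestronglyMeasurable, hx₁6⟩ ⟨hx₂.aestronglyMeasurable, hx₂6⟩).eLpNorm_ne_top
  have hΦ : Φ ≠ ∞ := ((hφ.continuous_fderiv one_ne_zero).memLp_of_hasCompactSupport
    (hφc.fderiv (𝕜 := ℝ))).eLpNorm_ne_top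
  have hdual : ‖∫ x, (x₁ x - x₂ x) * z x * (x₁ x + x₂ x) * φ x‖ₑ ≤
      K * I ^ 2 * (U * (Z * (X₁ + X₂))) * Φ :=
    calc _ ≤ K * (U * eLpNorm z 3 volume * eLpNorm (fun x => x₁ x + x₂ x) 3 volume) * Φ :=
          enorm_integral_mul_mul_mul_le volume finrank_euclideanSpace_fin
            (hx₁.sub hx₂).aestronglyMeasurable hz.aestronglyMeasurable
            (hx₁.add hx₂).aestronglyMeasurable hφ hφc
      _ ≤ K * (U * (Z * I) * ((X₁ + X₂) * I)) * Φ := by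
          gcongr
          · exact hL3 z hz hzD
          · refine (hL3 _ (hx₁.add hx₂) fun x hx => ?_).trans ?_
            · simp [hx₁D x hx, hx₂D x hx]
            · gcongr
              exact eLpNorm_add_le hx₁.aestronglyMeasurable hx₂.aestronglyMeasurable (by norm_num)
      _ = _ := by ring
  rw [eLpNorm_norm, ← Real.norm_eq_abs, ← toReal_enorm]
  calc _ ≤ (K * I ^ 2 * (U * (Z * (X₁ + X₂))) * Φ).toReal :=
        ENNReal.toReal_mono (by finiteness) hdual
    _ = (K * I ^ 2).toReal * U.toReal * (Z.toReal * (X₁.toReal + X₂.toReal)) * Φ.toReal := by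
        simp only [ENNReal.toReal_mul, ENNReal.toReal_add hx₁6.ne hx₂6.ne, mul_assoc]
    _ ≤ _ := by
        gcongr
        · linarith
        · exact mul_add_le_sq_add_sq_add_sq _ _ _

/-- Weak (dual) form of the key estimate (3.10) in the paper's continuity
proof: for a bounded measurable `D ⊆ ℝ³` there is `C > 0` (depending only on
`D`) such that for all `x₁, x₂, z ∈ L⁶` vanishing outside `D` and every `C¹`
compactly supported `φ : ℝ³ → ℝ`,
`|∫ (x₁ - x₂) z (x₁ + x₂) φ| ≤
   C ‖x₁ - x₂‖_{L⁶} (‖z‖_{L⁶}² + ‖x₁‖_{L⁶}² + ‖x₂‖_{L⁶}²) ‖ |Dφ| ‖_{L²}`. -/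
theorem dual_continuity_estimate
    (D : Set (EuclideanSpace ℝ (Fin 3))) (hD : MeasurableSet D)
    (hDbdd : Bornology.IsBounded D) :
    ∃ C : ℝ, 0 < C ∧
      ∀ (x₁ x₂ z φ : EuclideanSpace ℝ (Fin 3) → ℝ),
        Measurable x₁ → Measurable x₂ → Measurable z →
        (∀ x ∉ D, x₁ x = 0) → (∀ x ∉ D, x₂ x = 0) → (∀ x ∉ D, z x = 0) →
        eLpNorm x₁ 6 volume < ∞ → eLpNorm x₂ 6 volume < ∞ →
        eLpNorm z 6 volume < ∞ →
        ContDiff ℝ 1 φ → HasCompactSupport φ →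
        |∫ x, (x₁ x - x₂ x) * z x * (x₁ x + x₂ x) * φ x| ≤
          C * (eLpNorm (fun x => x₁ x - x₂ x) 6 volume).toReal *
            ((eLpNorm z 6 volume).toReal ^ 2 + (eLpNorm x₁ 6 volume).toReal ^ 2 +
              (eLpNorm x₂ 6 volume).toReal ^ 2) *
            (eLpNorm (fun x => ‖fderiv ℝ φ x‖) 2 volume).toReal :=
  dual_continuity_estimate_general D hDbdd
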